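/- arXiv:2107.03574 — 2 statements merged into one kernel-verified Lean document; each statement's English description precedes it below -/
import Mathlib

section
/- Let p be a prime with p ≡ 3 (mod 4), and define the quaternary sequence g^2 of period 2p by g^2_t = φ(s^2_t, s^3_t) where s^2_t = b_t (indices mod p), s^3_t = c_t for even t and 1 - c_t for odd t, b and c are the Legendre sequences of period p, and φ is the Gray map φ(0,0)=0, φ(0,1)=1, φ(1,1)=2, φ(1,0)=3. Let G = ∑_{t=0}^{2p-1} g^2_t·4^t. Then gcd(G, 4^p - 1) = 1. -/
/-- The Legendre sequence `b` of period `p`. -/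
def legb (p : ℕ) [Fact p.Prime] (t : ℕ) : ℤ :=
  if (t : ZMod p) = 0 then 0 else (1 - legendreSym p (t : ℤ)) / 2

/-- The Legendre sequence `c` of period `p`. -/
def legc (p : ℕ) [Fact p.Prime] (t : ℕ) : ℤ :=
  if (t : ZMod p) = 0 then 1 else (1 - legendreSym p (t : ℤ)) / 2

/-- The Gray map `φ(a,e) = 2a - a(e-1) - (a-1)e`. -/
def gray (a e : ℤ) : ℤ := 2 * a - a * (e - 1) - (a - 1) * e

/-!
Modulo `4^p - 1` the terms `g_t` and `g_{t+p}` fold together; they have opposite parity, and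
`φ(a, e) + φ(a, 1 - e) = 4a + 1`, so `G ≡ -2 (T + 1)` with `T = ∑_{t<p} (t/p) 4^t`.
Let `q` be a prime dividing `4^p - 1`. If `4 ≡ 1 (mod q)`, then `T ≡ ∑_t (t/p) = 0`.
Otherwise `4` is a primitive `p`-th root of unity mod `q`, so `p ∣ q - 1`, and `T` is a quadratic
Gauss sum: `T² = (-1/p) p = -p`. Then `T ≡ -1` would give `q ∣ p + 1`, forcing `q = p + 1`,
which is even.
-/

open Finset

lemma sum_zmod_eq_sum_range {M : Type*} [AddCommMonoid M] (n : ℕ) [NeZero n] (f : ZMod n → M) :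
    ∑ a : ZMod n, f a = ∑ t ∈ range n, f t :=
  sum_nbij' ZMod.val Nat.cast (fun a _ => mem_range.2 a.val_lt) (fun _ _ => mem_univ _)
    (fun a _ => ZMod.natCast_zmod_val a) (fun _ ht => ZMod.val_cast_of_lt (mem_range.1 ht))
    (fun a _ => by rw [ZMod.natCast_zmod_val])

lemma pow_sub_one_dvd_sum_range_two_mul_sub {R : Type*} [CommRing R] (f : ℕ → R) (x : R)
    (n : ℕ) : x ^ n - 1 ∣
      ∑ t ∈ range (2 * n), f t * x ^ t - ∑ t ∈ range n, (f t + f (n + t)) * x ^ t := by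
  have : ∑ t ∈ range (2 * n), f t * x ^ t - ∑ t ∈ range n, (f t + f (n + t)) * x ^ t
      = ∑ t ∈ range n, f (n + t) * x ^ t * (x ^ n - 1) := by
    rw [two_mul, sum_range_add]
    simp only [add_mul, sum_add_distrib, add_sub_add_left_eq_sub, ← sum_sub_distrib]
    exact sum_congr rfl fun t _ => by ring
  rw [this]
  exact dvd_sum fun t _ => dvd_mul_left _ _

lemma gray_add_gray_one_sub (a e : ℤ) : gray a e + gray a (1 - e) = 4 * a + 1 := by
  unfold gray; ring

section

variable (p : ℕ) [Fact p.Prime]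

def graySeq (t : ℕ) : ℤ :=
  if t % 2 = 0 then gray (legb p t) (legc p t) else gray (legb p t) (1 - legc p t)

def legendreGaussSum {R : Type*} [CommRing R] (x : R) : R :=
  ∑ t ∈ range p, (legendreSym p t : R) * x ^ t

lemma legb_add_left (t : ℕ) : legb p (p + t) = legb p t := by
  simp [legb, legendreSym]

lemma legc_add_left (t : ℕ) : legc p (p + t) = legc p t := by
  simp [legc, legendreSym]

lemma graySeq_add_graySeq_add_left (hp : p % 2 = 1) (t : ℕ) :
    graySeq p t + graySeq p (p + t) = 4 * legb p t + 1 := by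
  have hab := gray_add_gray_one_sub (legb p t) (legc p t)
  unfold graySeq
  rw [legb_add_left, legc_add_left]
  rcases Nat.mod_two_eq_zero_or_one t with ht | ht
  · rw [if_pos ht, if_neg (by omega)]; exact hab
  · rw [if_neg (by omega), if_pos (by omega)]; rwa [add_comm]

lemma four_mul_legb_add_one (t : ℕ) :
    4 * legb p t + 1 = 3 - 2 * legendreSym p t - if (t : ZMod p) = 0 then 2 else 0 := by
  unfold legb
  split_ifs with ht
  · simp [legendreSym, ht]
  · rcases legendreSym.eq_one_or_neg_one p (a := t) (by exact_mod_cast ht) with h | h <;>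
      simp [h]

lemma sum_four_mul_legb_add_one :
    ∑ t ∈ range p, (4 * legb p t + 1) * 4 ^ t
      = 4 ^ p - 1 - 2 * (legendreGaussSum p (4 : ℤ) + 1) := by
  have hgeom : ∑ t ∈ range p, 3 * (4 : ℤ) ^ t = 4 ^ p - 1 := by
    have h := geom_sum_mul (4 : ℤ) p
    norm_num at h
    rw [← mul_sum]; linarith
  have hzero : ∑ t ∈ range p, (if (t : ZMod p) = 0 then (2 : ℤ) else 0) * 4 ^ t = 2 := by
    rw [sum_eq_single 0]
    · simp
    · intro t ht ht0
      rw [if_neg, zero_mul]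
      rw [ZMod.natCast_eq_zero_iff]
      exact fun h => ht0 (Nat.eq_zero_of_dvd_of_lt h (mem_range.1 ht))
    · simp [(Fact.out : p.Prime).pos]
  simp only [four_mul_legb_add_one, sub_mul, sum_sub_distrib, hgeom, hzero, legendreGaussSum,
    Int.cast_id, mul_assoc, ← mul_sum]
  ring

lemma pow_sub_one_dvd_sum_graySeq (hp : p % 2 = 1) :
    (4 : ℤ) ^ p - 1 ∣
      ∑ t ∈ range (2 * p), graySeq p t * 4 ^ t + 2 * (legendreGaussSum p (4 : ℤ) + 1) := by
  have hfold := pow_sub_one_dvd_sum_range_two_mul_sub (graySeq p) (4 : ℤ) p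
  simp only [graySeq_add_graySeq_add_left p hp, sum_four_mul_legb_add_one] at hfold
  refine (dvd_add hfold dvd_rfl).trans (dvd_of_eq ?_)
  ring

@[simp, norm_cast]
lemma Int.cast_legendreGaussSum {R : Type*} [CommRing R] (x : ℤ) :
    ((legendreGaussSum p x : ℤ) : R) = legendreGaussSum p (x : R) := by
  simp [legendreGaussSum]

lemma legendreGaussSum_one {R : Type*} [CommRing R] (hp : p ≠ 2) :
    legendreGaussSum p (1 : R) = 0 := by
  have : NeZero p := ⟨(Fact.out : p.Prime).ne_zero⟩
  have hsum := quadraticChar_sum_zero (F := ZMod p) (by rwa [ZMod.ringChar_zmod_n])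
  rw [sum_zmod_eq_sum_range] at hsum
  rw [← Int.cast_one, ← Int.cast_legendreGaussSum, legendreGaussSum]
  simp only [one_pow, mul_one, Int.cast_id]
  simpa [legendreSym] using congrArg (Int.cast : ℤ → R) hsum

lemma legendreGaussSum_sq {F : Type*} [Field F] (hF : ringChar F ≠ 2) (hp : p ≠ 2) {ζ : F}
    (hζ : IsPrimitiveRoot ζ p) : legendreGaussSum p ζ ^ 2 = legendreSym p (-1) * p := by
  have : NeZero p := ⟨(Fact.out : p.Prime).ne_zero⟩
  let χ := (quadraticChar (ZMod p)).ringHomComp (Int.castRingHom F)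
  have hχ : χ ≠ 1 := by
    obtain ⟨a, ha⟩ :=
      quadraticChar_exists_neg_one' (F := ZMod p) (by rwa [ZMod.ringChar_zmod_n])
    rw [MulChar.ne_one_iff]
    exact ⟨a, by simpa [χ, ha] using Ring.neg_one_ne_one_of_char_ne_two hF⟩
  have hgauss : legendreGaussSum p ζ = gaussSum χ (AddChar.zmodChar p hζ.pow_eq_one) := by
    rw [gaussSum, sum_zmod_eq_sum_range]
    exact sum_congr rfl fun t _ => by simp [χ, legendreSym, AddChar.zmodChar_apply']
  rw [hgauss, gaussSum_sq hχ ((quadraticChar_isQuadratic _).comp _)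
    (AddChar.zmodChar_primitive_of_primitive_root p hζ)]
  simp [χ, legendreSym, ZMod.card]

lemma legendreGaussSum_four_add_one_ne_zero (h3 : p % 4 = 3) {q : ℕ} [Fact q.Prime]
    (hq : (4 : ZMod q) ^ p = 1) : legendreGaussSum p (4 : ZMod q) + 1 ≠ 0 := by
  have hp2 : p ≠ 2 := by omega
  by_cases h41 : (4 : ZMod q) = 1
  · rw [h41, legendreGaussSum_one p hp2, zero_add]
    exact one_ne_zero
  have hq2 : q ≠ 2 := by
    rintro rfl
    rw [show (4 : ZMod 2) = 0 from rfl, zero_pow (Fact.out : p.Prime).ne_zero] at hq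
    exact zero_ne_one hq
  have hζ : IsPrimitiveRoot (4 : ZMod q) p := orderOf_eq_prime hq h41 ▸ IsPrimitiveRoot.orderOf 4
  have hpq : p ∣ q - 1 :=
    hζ.eq_orderOf ▸ ZMod.orderOf_dvd_card_sub_one (hζ.ne_zero (Fact.out : p.Prime).ne_zero)
  intro hT
  have hsq := legendreGaussSum_sq p (by rwa [ZMod.ringChar_zmod_n]) hp2 hζ
  rw [eq_neg_of_add_eq_zero_left hT, legendreSym.at_neg_one hp2, ZMod.χ₄_nat_three_mod_four h3]
    at hsq
  have hqp : q ∣ p + 1 := by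
    rw [← ZMod.natCast_eq_zero_iff]
    push_cast at hsq ⊢
    linear_combination hsq
  have hq1 := (Fact.out : q.Prime).two_le
  have hqle := Nat.le_of_dvd (by omega) hqp
  have hple := Nat.le_of_dvd (by omega) hpq
  exact hq2 ((Fact.out : q.Prime).even_iff.1 (Nat.even_iff.2 (by omega)))

lemma isCoprime_legendreGaussSum_four_add_one (h3 : p % 4 = 3) :
    IsCoprime (legendreGaussSum p (4 : ℤ) + 1) (4 ^ p - 1) := by
  have hM : (4 : ℤ) ^ p - 1 ≠ 0 :=
    sub_ne_zero.2 (one_lt_pow₀ (by norm_num) (Fact.out : p.Prime).ne_zero).ne'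
  refine isCoprime_of_prime_dvd (fun h => hM h.2) fun z hz hzT hzM => ?_
  have := Fact.mk (Int.prime_iff_natAbs_prime.1 hz)
  rw [← Int.natAbs_dvd, ← ZMod.intCast_zmod_eq_zero_iff_dvd] at hzT hzM
  push_cast at hzT hzM
  exact legendreGaussSum_four_add_one_ne_zero p h3 (sub_eq_zero.1 hzM) hzT

end

theorem stmt9 (p : ℕ) [Fact p.Prime] (h3 : p % 4 = 3) :
    Int.gcd
      (∑ t ∈ Finset.range (2 * p),
        (if t % 2 = 0 then gray (legb p t) (legc p t)
          else gray (legb p t) (1 - legc p t)) * 4 ^ t)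
      ((4:ℤ) ^ p - 1) = 1 := by
  have hodd : Odd ((4 : ℤ) ^ p - 1) := by
    simp [Int.even_pow, parity_simps, (Fact.out : p.Prime).ne_zero]; decide
  obtain ⟨k, hk⟩ := pow_sub_one_dvd_sum_graySeq p (by omega)
  rw [← Int.isCoprime_iff_gcd_eq_one]
  change IsCoprime (∑ t ∈ range (2 * p), graySeq p t * 4 ^ t) _
  rw [show ∑ t ∈ range (2 * p), graySeq p t * 4 ^ t
      = -(2 * (legendreGaussSum p 4 + 1)) + (4 ^ p - 1) * k by linear_combination hk,
    IsCoprime.add_mul_left_left_iff, IsCoprime.neg_left_iff, IsCoprime.mul_left_iff]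
  exact ⟨Int.isCoprime_two_left.2 hodd, isCoprime_legendreGaussSum_four_add_one p h3⟩
end

section
/- Let p be a prime with p ≡ 3 (mod 4) and g^2 the quaternary sequence of period 2p from the Kim et al. construction. Then the 4-adic complexity Φ_4(g^2) equals log_4((4^{2p}-1)/5) if 5 | (p-2), and log_4(4^{2p}-1) otherwise; equivalently gcd(4^{2p}-1, ∑_{t=0}^{2p-1} g^2_t·4^t) = 5 if 5|(p-2) and 1 otherwise. -/
/-! Work modulo a prime `q` dividing both `4^(2p) - 1` and `G`. For `t < 2p` one has
`g²_t = 1 + (t mod 2) - (t/p) - 2[t = p]`, so `G` is a combination of geometric sums in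
`x = 4` and of `T(x) = ∑_{t<p} (t/p) xᵗ`. If `4 ≠ ±1` in `ZMod q`, the geometric sums
vanish; then `4^p = -1` leaves `G ≡ 2`, while `4^p = 1` forces `T(4) = -1`, which is
impossible because `T(4)` is a quadratic Gauss sum, of square `-p`. The remaining primes are
`q = 3`, where `G ≡ 3p - 2 ≡ 1`, and `q = 5`, where `G ≡ 2 - p`. Finally
`25 ∤ 4^(2p) - 1` when `p ≡ 2 (mod 5)`. -/

open Finset

/-- The sequence `g²` of Kim et al. -/
def kimSeq (p : ℕ) [Fact p.Prime] (t : ℕ) : ℤ :=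
  if t % 2 = 0 then gray (legb p t) (legc p t) else gray (legb p t) (1 - legc p t)

/-- At a primitive `p`-th root of unity this is a quadratic Gauss sum. -/
def legendreSum {R : Type*} [CommRing R] (p : ℕ) [Fact p.Prime] (x : R) : R :=
  ∑ t ∈ range p, (legendreSym p t : R) * x ^ t

lemma sum_range_eq_sum_zmod {M : Type*} [AddCommMonoid M] (n : ℕ) [NeZero n]
    (f : ZMod n → M) : ∑ t ∈ range n, f t = ∑ a : ZMod n, f a := by
  refine sum_nbij' (fun t => (t : ZMod n)) (fun a => a.val) ?_ ?_ ?_ ?_ ?_ <;>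
    intros <;>
    simp_all [ZMod.val_lt, Nat.mod_eq_of_lt]

lemma sum_range_two_mul {M : Type*} [AddCommMonoid M] (n : ℕ) (f : ℕ → M) :
    ∑ t ∈ range (2 * n), f t = ∑ s ∈ range n, (f (2 * s) + f (2 * s + 1)) := by
  induction n with
  | zero => simp
  | succ n ih => rw [Nat.mul_succ, sum_range_succ, sum_range_succ, ih, sum_range_succ, add_assoc]

section Legendre

variable (p : ℕ) [Fact p.Prime]

lemma legendreSym_natCast_add_self (t : ℕ) :
    legendreSym p ((p + t : ℕ) : ℤ) = legendreSym p t := by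
  simp only [legendreSym, Nat.cast_add, Int.cast_add, Int.cast_natCast, ZMod.natCast_self,
    zero_add]

lemma sum_legendreSym_range_eq_zero (hp : p ≠ 2) :
    ∑ t ∈ range p, legendreSym p t = 0 := by
  have : NeZero p := ⟨(Fact.out : p.Prime).ne_zero⟩
  simp only [legendreSym, Int.cast_natCast]
  rw [sum_range_eq_sum_zmod p (quadraticChar (ZMod p))]
  exact quadraticChar_sum_zero (by rwa [ZMod.ringChar_zmod_n])

end Legendre

section Sequence

variable {p : ℕ} [Fact p.Prime]

lemma kimSeq_eq (hp : p ≠ 2) {t : ℕ} (ht : t < 2 * p) :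
    kimSeq p t = 1 + ↑(t % 2) - legendreSym p t - if t = p then 2 else 0 := by
  have hp_odd : p % 2 = 1 := Nat.odd_iff.mp ((Fact.out : p.Prime).odd_of_ne_two hp)
  by_cases ht0 : (t : ZMod p) = 0
  · have hL : legendreSym p t = 0 := legendreSym.eq_zero_iff p _ |>.mpr (by exact_mod_cast ht0)
    obtain ⟨k, rfl⟩ := (ZMod.natCast_eq_zero_iff t p).mp ht0
    obtain rfl | rfl : k = 0 ∨ k = 1 := by
      have : k < 2 := by nlinarith
      omega
    · simp [kimSeq, legb, legc, gray, ((Fact.out : p.Prime).ne_zero).symm]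
    · simp_all [kimSeq, legb, legc, gray]
  · have htp : t ≠ p := by rintro rfl; simp at ht0
    rcases legendreSym.eq_one_or_neg_one p (a := t) (by exact_mod_cast ht0) with hL | hL <;>
    rcases Nat.mod_two_eq_zero_or_one t with ht2 | ht2 <;>
    simp [kimSeq, legb, legc, gray, ht0, hL, htp, ht2]

end Sequence

section Evaluation

variable {R : Type*} [CommRing R] {p : ℕ} [Fact p.Prime]

lemma sum_range_two_mul_legendreSym_mul_pow (x : R) :
    ∑ t ∈ range (2 * p), (legendreSym p t : R) * x ^ t = (1 + x ^ p) * legendreSum p x := by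
  rw [two_mul, sum_range_add, legendreSum, add_mul, one_mul, mul_sum]
  congr 1
  refine sum_congr rfl fun t _ => ?_
  rw [legendreSym_natCast_add_self, pow_add]
  ring

lemma sum_kimSeq_mul_pow (hp : p ≠ 2) (x : R) :
    ∑ t ∈ range (2 * p), (kimSeq p t : R) * x ^ t =
      ∑ t ∈ range (2 * p), x ^ t + x * ∑ s ∈ range p, (x ^ 2) ^ s
        - (1 + x ^ p) * legendreSum p x - 2 * x ^ p := by
  have hterm : ∀ t ∈ range (2 * p), (kimSeq p t : R) * x ^ t =
      x ^ t + ((t % 2 : ℕ) : R) * x ^ t - (legendreSym p t : R) * x ^ t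
        - (if t = p then 2 * x ^ p else 0) := by
    intro t ht
    rw [kimSeq_eq hp (mem_range.mp ht)]
    split_ifs with htp <;>
      simp only [htp, Int.cast_sub, Int.cast_add, Int.cast_one, Int.cast_natCast, Int.cast_ofNat,
        Int.cast_zero] <;>
      ring
  have hodd : ∑ t ∈ range (2 * p), ((t % 2 : ℕ) : R) * x ^ t =
      x * ∑ s ∈ range p, (x ^ 2) ^ s := by
    rw [sum_range_two_mul, mul_sum]
    refine sum_congr rfl fun s _ => ?_
    rw [show 2 * s % 2 = 0 by omega, show (2 * s + 1) % 2 = 1 by omega, Nat.cast_zero,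
      Nat.cast_one, pow_succ, pow_mul]
    ring
  rw [sum_congr rfl hterm, sum_sub_distrib, sum_sub_distrib, sum_add_distrib, hodd,
    sum_range_two_mul_legendreSym_mul_pow, sum_ite_eq' _ _ (fun _ => 2 * x ^ p),
    if_pos (mem_range.mpr (by have := (Fact.out : p.Prime).pos; omega))]

lemma sum_kimSeq_mul_one_pow (hp : p ≠ 2) :
    ∑ t ∈ range (2 * p), (kimSeq p t : R) * 1 ^ t = 3 * p - 2 := by
  rw [sum_kimSeq_mul_pow hp]
  simp only [one_pow, sum_const, card_range, nsmul_eq_mul, mul_one, one_mul, legendreSum]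
  rw [← Int.cast_sum, sum_legendreSym_range_eq_zero p hp]
  push_cast
  ring

lemma sum_kimSeq_mul_neg_one_pow (hp : p ≠ 2) :
    ∑ t ∈ range (2 * p), (kimSeq p t : R) * (-1) ^ t = 2 - p := by
  have hp_odd : Odd p := (Fact.out : p.Prime).odd_of_ne_two hp
  rw [sum_kimSeq_mul_pow hp, hp_odd.neg_one_pow, neg_one_geom_sum, if_pos (even_two_mul p)]
  simp only [neg_one_sq, one_pow, sum_const, card_range, nsmul_eq_mul, mul_one]
  ring

end Evaluation

section Field

variable {K : Type*} [Field K] {p : ℕ} [Fact p.Prime]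

lemma sum_kimSeq_mul_pow_of_pow_two_mul_eq_one (hp : p ≠ 2) {x : K} (hx : x ^ 2 ≠ 1)
    (hx2p : x ^ (2 * p) = 1) :
    ∑ t ∈ range (2 * p), (kimSeq p t : K) * x ^ t =
      -(1 + x ^ p) * legendreSum p x - 2 * x ^ p := by
  have hx1 : x ≠ 1 := by rintro rfl; simp at hx
  rw [sum_kimSeq_mul_pow hp, geom_sum_eq hx1, geom_sum_eq hx, hx2p, ← pow_mul, hx2p]
  ring

lemma legendreSum_sq (hp : p ≠ 2) (hK : ringChar K ≠ 2) {ζ : K} (hζ : IsPrimitiveRoot ζ p) :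
    legendreSum p ζ ^ 2 = legendreSym p (-1) * p := by
  have : NeZero p := ⟨(Fact.out : p.Prime).ne_zero⟩
  set χ : MulChar (ZMod p) K := (quadraticChar (ZMod p)).ringHomComp (Int.castRingHom K)
  have hχ : χ ≠ 1 := by
    obtain ⟨a, ha⟩ :=
      quadraticChar_exists_neg_one' (F := ZMod p) (by rwa [ZMod.ringChar_zmod_n])
    refine MulChar.ne_one_iff.mpr ⟨a, ?_⟩
    simpa [χ, ha] using Ring.neg_one_ne_one_of_char_ne_two hK
  have hsum : legendreSum p ζ = gaussSum χ (AddChar.zmodChar p hζ.pow_eq_one) := by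
    rw [gaussSum, legendreSum, ← sum_range_eq_sum_zmod]
    refine sum_congr rfl fun t _ => ?_
    simp [χ, legendreSym, AddChar.zmodChar_apply']
  rw [hsum, gaussSum_sq hχ ((quadraticChar_isQuadratic _).comp _)
    (AddChar.zmodChar_primitive_of_primitive_root p hζ)]
  simp [χ, legendreSym]

end Field

section PrimeDivisor

variable {p q : ℕ} [Fact p.Prime] [Fact q.Prime]

/-- A solution would force `-p = 1` in `ZMod q`, so `q ∣ p + 1`, while `p ∣ q - 1` because
`ZMod q` contains a primitive `p`-th root of unity. -/
lemma legendreSum_ne_neg_one (hp : p % 4 = 3) (hq : q ≠ 2) {ζ : ZMod q}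
    (hζ : IsPrimitiveRoot ζ p) : legendreSum p ζ ≠ -1 := by
  intro h
  have hsq := legendreSum_sq (by omega) (by rwa [ZMod.ringChar_zmod_n]) hζ
  rw [h, legendreSym.at_neg_one (by omega), ZMod.χ₄_nat_three_mod_four hp] at hsq
  have hqp : q ∣ p + 1 := (ZMod.natCast_eq_zero_iff _ _).mp <| by
    push_cast at hsq ⊢
    linear_combination hsq
  have hpq : p ∣ q - 1 := hζ.eq_orderOf ▸ ZMod.orderOf_dvd_card_sub_one
    (hζ.ne_zero (Fact.out : p.Prime).ne_zero)
  have hq1 := (Fact.out : q.Prime).two_le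
  have hqp1 : q = p + 1 := le_antisymm (Nat.le_of_dvd (by omega) hqp)
    (by have := Nat.le_of_dvd (by omega) hpq; omega)
  have := (Fact.out : q.Prime).eq_one_or_self_of_dvd 2 (by omega)
  omega

lemma eq_five_of_sum_kimSeq_eq_zero (hp : p % 4 = 3) (hN : (4 : ZMod q) ^ (2 * p) = 1)
    (hG : ∑ t ∈ range (2 * p), (kimSeq p t : ZMod q) * 4 ^ t = 0) : q = 5 ∧ p % 5 = 2 := by
  have hp2 : p ≠ 2 := by omega
  have hq2 : q ≠ 2 := by
    rintro rfl
    rw [show (4 : ZMod 2) = 0 from rfl, zero_pow (by omega)] at hN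
    exact zero_ne_one hN
  have h2 : (2 : ZMod q) ≠ 0 := by exact_mod_cast ZMod.prime_ne_zero q 2 hq2
  have hq3 : q ≠ 3 := by
    rintro rfl
    rw [show (4 : ZMod 3) = 1 from rfl, sum_kimSeq_mul_one_pow hp2,
      show (3 : ZMod 3) = 0 from rfl] at hG
    exact h2 (by linear_combination -hG)
  by_cases hq5 : q = 5
  · subst hq5
    rw [show (4 : ZMod 5) = -1 from rfl, sum_kimSeq_mul_neg_one_pow hp2, sub_eq_zero] at hG
    have := (ZMod.natCast_eq_natCast_iff' 2 p 5).mp (by exact_mod_cast hG)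
    exact ⟨rfl, by omega⟩
  exfalso
  have hx : (4 : ZMod q) ^ 2 ≠ 1 := by
    intro h
    have h15 : ((3 * 5 : ℕ) : ZMod q) = 0 := by push_cast; linear_combination h
    rw [Nat.cast_mul, mul_eq_zero] at h15
    exact h15.elim (ZMod.prime_ne_zero q 3 hq3) (@ZMod.prime_ne_zero q 5 _ ⟨Nat.prime_five⟩ hq5)
  rw [sum_kimSeq_mul_pow_of_pow_two_mul_eq_one hp2 hx hN] at hG
  have hxp2 : ((4 : ZMod q) ^ p) ^ 2 = 1 := by rw [← pow_mul, mul_comm, hN]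
  rcases sq_eq_one_iff.mp hxp2 with hxp | hxp
  · have hx1 : (4 : ZMod q) ≠ 1 := by rintro h; simp [h] at hx
    have hζ : IsPrimitiveRoot (4 : ZMod q) p :=
      orderOf_eq_prime hxp hx1 ▸ IsPrimitiveRoot.orderOf _
    rw [hxp] at hG
    have hT : (2 : ZMod q) * (legendreSum p 4 + 1) = 0 := by linear_combination -hG
    exact legendreSum_ne_neg_one hp hq2 hζ
      (eq_neg_of_add_eq_zero_left ((mul_eq_zero.mp hT).resolve_left h2))
  · rw [hxp] at hG
    exact h2 (by linear_combination hG)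

end PrimeDivisor

lemma Nat.eq_prime_of_forall_prime_dvd_eq {d q : ℕ} (hd : d ≠ 0) (hq : q.Prime)
    (h : ∀ r, r.Prime → r ∣ d → r = q) (hqd : q ∣ d) (hq2 : ¬q ^ 2 ∣ d) : d = q := by
  rw [Nat.eq_prime_pow_of_unique_prime_dvd hd (h _ · ·)] at hqd hq2 ⊢
  conv_lhs at hqd => rw [← pow_one q]
  rw [Nat.pow_dvd_pow_iff_le_right hq.one_lt] at hqd hq2
  rw [show d.primeFactorsList.length = 1 by omega, pow_one]

section Integers

variable {p : ℕ} [Fact p.Prime]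

lemma five_dvd_four_pow_two_mul_sub_one (n : ℕ) : (5 : ℤ) ∣ 4 ^ (2 * n) - 1 := by
  have h := sub_dvd_pow_sub_pow ((4 : ℤ) ^ 2) 1 n
  rw [one_pow, ← pow_mul] at h
  exact (by norm_num : (5 : ℤ) ∣ 4 ^ 2 - 1).trans h

/-- `4 ^ 10 ≡ 1 [ZMOD 25]`, so only `p mod 5` matters. -/
lemma not_twentyFive_dvd_four_pow_two_mul_sub_one (hp : p % 5 = 2) :
    ¬(25 : ℤ) ∣ 4 ^ (2 * p) - 1 := by
  intro h
  have h25 := (ZMod.intCast_zmod_eq_zero_iff_dvd _ 25).mpr h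
  obtain ⟨k, rfl⟩ : ∃ k, p = 5 * k + 2 := ⟨p / 5, by omega⟩
  push_cast at h25
  rw [show 2 * (5 * k + 2) = 10 * k + 4 by ring, pow_add, pow_mul,
    show (4 : ZMod 25) ^ 10 = 1 from rfl, one_pow, one_mul] at h25
  exact absurd h25 (by decide)

lemma five_dvd_sum_kimSeq (hp : p ≠ 2) (h5 : p % 5 = 2) :
    (5 : ℤ) ∣ ∑ t ∈ range (2 * p), kimSeq p t * 4 ^ t := by
  refine (ZMod.intCast_zmod_eq_zero_iff_dvd _ 5).mp ?_
  push_cast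
  rw [show (4 : ZMod 5) = -1 from rfl, sum_kimSeq_mul_neg_one_pow hp, sub_eq_zero]
  exact_mod_cast (ZMod.natCast_eq_natCast_iff' 2 p 5).mpr (by omega)

lemma eq_five_of_prime_dvd_sum_kimSeq (hp : p % 4 = 3) {r : ℕ} (hr : r.Prime)
    (hrN : (r : ℤ) ∣ 4 ^ (2 * p) - 1)
    (hrG : (r : ℤ) ∣ ∑ t ∈ range (2 * p), kimSeq p t * 4 ^ t) :
    r = 5 ∧ p % 5 = 2 := by
  have := Fact.mk hr
  rw [← ZMod.intCast_zmod_eq_zero_iff_dvd] at hrN hrG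
  push_cast at hrN hrG
  exact eq_five_of_sum_kimSeq_eq_zero hp (sub_eq_zero.mp hrN) hrG

end Integers

theorem stmt11 (p : ℕ) [Fact p.Prime] (h3 : p % 4 = 3)
    (G : ℤ)
    (hG : G = ∑ t ∈ Finset.range (2 * p),
      (if t % 2 = 0 then gray (legb p t) (legc p t)
        else gray (legb p t) (1 - legc p t)) * 4 ^ t) :
    Int.gcd ((4:ℤ) ^ (2 * p) - 1) G = (if 5 ∣ p - 2 then 5 else 1) ∧
    Real.logb 4 (((4:ℝ) ^ (2 * p) - 1) / (Int.gcd ((4:ℤ) ^ (2 * p) - 1) G : ℝ)) =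
      (if 5 ∣ p - 2 then Real.logb 4 (((4:ℝ) ^ (2 * p) - 1) / 5)
        else Real.logb 4 ((4:ℝ) ^ (2 * p) - 1)) := by
  change G = ∑ t ∈ range (2 * p), kimSeq p t * 4 ^ t at hG
  set N : ℤ := 4 ^ (2 * p) - 1
  have hN : N ≠ 0 := by
    have : (1 : ℤ) < 4 ^ (2 * p) := one_lt_pow₀ (by norm_num) (by omega)
    omega
  have hprime (r : ℕ) (hr : r.Prime) (hrd : r ∣ N.gcd G) : r = 5 ∧ p % 5 = 2 :=
    eq_five_of_prime_dvd_sum_kimSeq h3 hr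
      ((Int.natCast_dvd_natCast.mpr hrd).trans (Int.gcd_dvd_left _ _))
      (hG ▸ (Int.natCast_dvd_natCast.mpr hrd).trans (Int.gcd_dvd_right _ _))
  have hgcd : N.gcd G = if 5 ∣ p - 2 then 5 else 1 := by
    split_ifs with h5
    · have h5 : p % 5 = 2 := by omega
      refine Nat.eq_prime_of_forall_prime_dvd_eq (Int.gcd_ne_zero_left hN) Nat.prime_five
        (fun r hr hrd => (hprime r hr hrd).1)
        (Int.dvd_gcd (five_dvd_four_pow_two_mul_sub_one p)
          (hG ▸ five_dvd_sum_kimSeq (by omega) h5))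
        fun h25 => not_twentyFive_dvd_four_pow_two_mul_sub_one h5 ?_
      exact_mod_cast (Int.natCast_dvd_natCast.mpr h25).trans (Int.gcd_dvd_left N G)
    · exact Nat.eq_one_iff_not_exists_prime_dvd.mpr fun r hr hrd => h5 <| by
        have := (hprime r hr hrd).2
        omega
  refine ⟨hgcd, ?_⟩
  rw [hgcd]
  split_ifs <;> norm_num
end
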